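/- arXiv:1003.5426 — 2 statements merged into one kernel-verified Lean document; each statement's English description precedes it below -/
import Mathlib

section
/- Let U be an n×n complex matrix that is Hermitian with all real entries (i.e., a real symmetric matrix viewed over ℂ), let θ be a real number, set A = exp(iθ) and δ = −2cos(2θ), and suppose U² = δ·U. Then the matrix ρ = A·I + A⁻¹·U is unitary. -/
open Complex Matrix

/-- If `U` is an `n×n` complex Hermitian matrix with all real
entries, `A = exp(iθ)`, `δ = −2cos(2θ)`, and `U² = δ·U`, then
`ρ = A·I + A⁻¹·U` is unitary. -/
theorem stmt4 {n : ℕ} (U : Matrix (Fin n) (Fin n) ℂ)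
    (hHerm : U.IsHermitian) (hReal : ∀ i j, (U i j).im = 0)
    (θ : ℝ) (A : ℂ) (hA : A = Complex.exp (θ * Complex.I))
    (δ : ℝ) (hδ : δ = -2 * Real.cos (2 * θ))
    (hU : U ^ 2 = (δ : ℂ) • U) :
    (A • (1 : Matrix (Fin n) (Fin n) ℂ) + A⁻¹ • U) ∈ Matrix.unitaryGroup (Fin n) ℂ := by
  have hA0 : A ≠ 0 := by rw [hA]; exact Complex.exp_ne_zero _
  have hstarA : star A = A⁻¹ := by
    rw [hA, Complex.star_def, ← Complex.exp_conj, ← Complex.exp_neg]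
    simp [_root_.map_mul, Complex.conj_I]
  have hstarU : star U = U := hHerm
  have h2 : A ^ 2 = Complex.exp (((2 * θ : ℝ) : ℂ) * Complex.I) := by
    rw [hA, ← Complex.exp_nat_mul]
    push_cast
    ring_nf
  have h2' : A⁻¹ ^ 2 = Complex.exp (-(((2 * θ : ℝ) : ℂ) * Complex.I)) := by
    rw [inv_pow, h2, ← Complex.exp_neg]
  have hsum : (A ^ 2 + A⁻¹ ^ 2) + (δ : ℂ) = 0 := by
    have hc : ((δ : ℝ) : ℂ) = -(2 * Complex.cos ((2 * θ : ℝ) : ℂ)) := by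
      rw [hδ]
      push_cast [Complex.ofReal_cos]
      ring
    rw [h2, h2', hc, Complex.two_cos]
    ring
  rw [Matrix.mem_unitaryGroup_iff]
  have hx : U * U = (δ : ℂ) • U := by rw [← sq]; exact hU
  have key : (A • (1 : Matrix (Fin n) (Fin n) ℂ) + A⁻¹ • U) *
      star (A • (1 : Matrix (Fin n) (Fin n) ℂ) + A⁻¹ • U)
      = 1 + ((A ^ 2 + A⁻¹ ^ 2) + (δ : ℂ)) • U := by
    rw [star_add, star_smul, star_smul, star_one, hstarU, hstarA, star_inv₀, hstarA, inv_inv]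
    simp only [Matrix.add_mul, Matrix.mul_add, Matrix.smul_mul, Matrix.mul_smul,
      Matrix.one_mul, Matrix.mul_one, smul_add, smul_smul, hx]
    rw [inv_mul_cancel₀ hA0, one_smul]
    match_scalars <;> field_simp <;> ring
  rw [key, hsum, zero_smul, add_zero]
end

section
/- Let θ be a real number with 4cos²(2θ) ≥ 1, set A = exp(iθ) and δ = −2cos(2θ), and define the 2×2 matrices U₁ = [[δ,0],[0,0]] and U₂ = [[δ⁻¹, √(1−δ⁻²)],[√(1−δ⁻²), δ−δ⁻¹]] (regarded as complex matrices). Then both ρ(σ₁) = A·I + A⁻¹·U₁ and ρ(σ₂) = A·I + A⁻¹·U₂ are unitary 2×2 complex matrices. -/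
open Matrix in
lemma stmt8_key (A : ℂ) (hA1 : A * (starRingEnd ℂ A) = 1) (δ : ℝ)
    (hAδ : A ^ 2 + (starRingEnd ℂ A) ^ 2 = -(δ : ℂ))
    (M : Matrix (Fin 2) (Fin 2) ℂ) (hM : Mᴴ = M)
    (hM2 : M * M = (δ : ℂ) • M) :
    (A • (1 : Matrix (Fin 2) (Fin 2) ℂ) + A⁻¹ • M) ∈ Matrix.unitaryGroup (Fin 2) ℂ := by
  have hA0 : A ≠ 0 := by
    intro h; rw [h] at hA1; simp at hA1
  have hconj : starRingEnd ℂ A = A⁻¹ := by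
    field_simp
    linear_combination hA1
  rw [Matrix.mem_unitaryGroup_iff]
  rw [Matrix.star_eq_conjTranspose]
  rw [Matrix.conjTranspose_add, Matrix.conjTranspose_smul, Matrix.conjTranspose_smul,
    Matrix.conjTranspose_one, hM]
  have hstarA : star A = A⁻¹ := hconj
  have hstarAinv : star A⁻¹ = A := by
    rw [star_inv₀, hstarA, inv_inv]
  rw [hstarA, hstarAinv]
  rw [add_mul, mul_add, mul_add]
  rw [Matrix.smul_mul, Matrix.smul_mul, Matrix.smul_mul, Matrix.smul_mul,
    Matrix.mul_smul, Matrix.mul_smul, Matrix.mul_smul, Matrix.mul_smul]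
  simp only [Matrix.one_mul, Matrix.mul_one]
  rw [hM2]
  simp only [smul_smul]
  have h1 : A * A⁻¹ = 1 := mul_inv_cancel₀ hA0
  rw [h1, one_smul]
  have hc : A * A + (A⁻¹ * A⁻¹ + A⁻¹ * (A * (δ : ℂ))) = 0 := by
    rw [← hconj]
    linear_combination hAδ + (δ : ℂ) * hA1
  have key : (A * A) • M + ((A⁻¹ * A⁻¹) • M + (A⁻¹ * (A * (δ : ℂ))) • M) = 0 := by
    rw [← add_smul, ← add_smul, hc, zero_smul]
  rw [add_assoc, key, add_zero]

/-- For real `θ` with `4cos²(2θ) ≥ 1`, putting `A = exp(iθ)` and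
`δ = −2cos(2θ)`, the braid images `ρ(σ₁) = A·I + A⁻¹·U₁` and
`ρ(σ₂) = A·I + A⁻¹·U₂` are unitary `2×2` complex matrices, where
`U₁ = [[δ,0],[0,0]]` and `U₂ = [[δ⁻¹, √(1−δ⁻²)],[√(1−δ⁻²), δ−δ⁻¹]]`. -/
theorem stmt8 (θ : ℝ) (hθ : 4 * Real.cos (2 * θ) ^ 2 ≥ 1)
    (A : ℂ) (hA : A = Complex.exp (θ * Complex.I))
    (δ : ℝ) (hδ : δ = -2 * Real.cos (2 * θ))
    (U₁ U₂ : Matrix (Fin 2) (Fin 2) ℂ)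
    (hU₁ : U₁ = !![(δ : ℂ), 0; 0, 0])
    (hU₂ : U₂ = !![((δ⁻¹ : ℝ) : ℂ), ((Real.sqrt (1 - δ⁻¹ ^ 2) : ℝ) : ℂ);
                   ((Real.sqrt (1 - δ⁻¹ ^ 2) : ℝ) : ℂ), ((δ - δ⁻¹ : ℝ) : ℂ)]) :
    (A • (1 : Matrix (Fin 2) (Fin 2) ℂ) + A⁻¹ • U₁) ∈ Matrix.unitaryGroup (Fin 2) ℂ ∧
      (A • (1 : Matrix (Fin 2) (Fin 2) ℂ) + A⁻¹ • U₂) ∈ Matrix.unitaryGroup (Fin 2) ℂ := by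
  have hA1 : A * (starRingEnd ℂ A) = 1 := by
    rw [hA, ← Complex.exp_conj, ← Complex.exp_add]
    have : θ * Complex.I + (starRingEnd ℂ) (θ * Complex.I) = 0 := by
      simp [Complex.conj_I]
    rw [this, Complex.exp_zero]
  have hAδ : A ^ 2 + (starRingEnd ℂ A) ^ 2 = -(δ : ℂ) := by
    rw [hA, ← Complex.exp_conj, ← Complex.exp_nat_mul, ← Complex.exp_nat_mul]
    have h1 : ((2 : ℕ) : ℂ) * (θ * Complex.I) = ((2 * θ : ℝ) : ℂ) * Complex.I := by
      push_cast; ring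
    have h2 : ((2 : ℕ) : ℂ) * (starRingEnd ℂ) (θ * Complex.I) =
        -(((2 * θ : ℝ) : ℂ) * Complex.I) := by
      simp [Complex.conj_I]; push_cast; ring
    rw [h1, h2,
      show -(((2 * θ : ℝ) : ℂ) * Complex.I) = ((-(2 * θ) : ℝ) : ℂ) * Complex.I by
        push_cast; ring,
      Complex.exp_mul_I, Complex.exp_mul_I, ← Complex.ofReal_cos, ← Complex.ofReal_cos,
      ← Complex.ofReal_sin, ← Complex.ofReal_sin, Real.cos_neg, Real.sin_neg, hδ]
    push_cast
    ring
  have hδsq : δ ^ 2 ≥ 1 := by rw [hδ]; nlinarith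
  have hδ0 : δ ≠ 0 := by intro h; rw [h] at hδsq; norm_num at hδsq
  have hs : Real.sqrt (1 - δ⁻¹ ^ 2) ^ 2 = 1 - δ⁻¹ ^ 2 := by
    apply Real.sq_sqrt
    have h : δ⁻¹ ^ 2 ≤ 1 := by
      rw [inv_pow, inv_le_one_iff₀]
      right; exact hδsq
    linarith
  constructor
  · apply stmt8_key A hA1 δ hAδ
    · rw [hU₁]
      ext i j
      fin_cases i <;> fin_cases j <;> simp [Matrix.conjTranspose_apply]
    · rw [hU₁]
      ext i j
      fin_cases i <;> fin_cases j <;>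
        simp [Matrix.mul_apply, Fin.sum_univ_two] <;> ring
  · apply stmt8_key A hA1 δ hAδ
    · rw [hU₂]
      ext i j
      fin_cases i <;> fin_cases j <;> simp [Matrix.conjTranspose_apply]
    · rw [hU₂]
      ext i j
      have hinv : δ * δ⁻¹ = 1 := mul_inv_cancel₀ hδ0
      have hii : δ⁻¹ * δ⁻¹ = (δ ^ 2)⁻¹ := by rw [← mul_inv, ← pow_two]
      have hs2 : Real.sqrt (1 - (δ ^ 2)⁻¹) * Real.sqrt (1 - (δ ^ 2)⁻¹)
          = 1 - (δ ^ 2)⁻¹ := by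
        rw [← inv_pow, ← pow_two, hs, inv_pow]
      fin_cases i <;> fin_cases j <;>
        simp [Matrix.mul_apply, Fin.sum_univ_two] <;>
        norm_cast <;>
        nlinarith [hs2, hinv, hii]
end
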